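/- arXiv:2012.05644 — 5 statements merged into one kernel-verified Lean document; each statement's English description precedes it below -/
import Mathlib

section
/- For every graphon W : [0,1]² → [0,1] and every integer K ≥ 2, there exists a partition P = (P₁, …, P_K) of [0,1] into K measurable sets and a symmetric matrix (w_{kk'}) ∈ [0,1]^{K×K} such that the step function W_P(x,y) = Σ_{k,k'} w_{kk'} 1_{P_k × P_{k'}}(x,y) satisfies ‖W − W_P‖_□ ≤ (2/√(log K)) · ‖W‖_{L²}. -/
/-
Energy increment (Frieze–Kannan). For a partition `P` of `[0,1]`, the step function `W_P` with the
averages of `W` on the cells `P_k × P_k'` is the `L²`-orthogonal projection of `W` onto the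
`P`-step functions. If `|∫_{S×T} (W - W_P)| > ε`, splitting every part of `P` along `S` and `T`
gives at most `4|P|` parts, and since `1_{S×T}` is a step function of the refinement `Q`,
Cauchy–Schwarz gives `‖W - W_Q‖₂² ≤ ‖W - W_P‖₂² - ε²`. Starting from the trivial partition, after
`m = ⌊log₄ K⌋` rounds either `‖W - W_P‖_□ ≤ ε`, or `‖W - W_P‖₂² ≤ ‖W‖₂² - m ε² ≤ ε²` for
`ε = 2‖W‖₂ / √(log K)`, and then `‖W - W_P‖_□ ≤ ‖W - W_P‖₂ ≤ ε`.
-/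

open MeasureTheory unitInterval

noncomputable section

/-- The cut norm of a kernel `U : [0,1]² → ℝ`:
`sup` over measurable `S, T ⊆ [0,1]` of `|∫_{S×T} U|`. -/
def cutNorm (U : I → I → ℝ) : ℝ :=
  sSup { r : ℝ | ∃ S T : Set I, MeasurableSet S ∧ MeasurableSet T ∧
    r = |∫ p in S ×ˢ T, U p.1 p.2| }

/-- The L¹ norm of a kernel on `[0,1]²`. -/
def l1Norm (U : I → I → ℝ) : ℝ := ∫ p : I × I, |U p.1 p.2|

/-- The L² norm of a kernel on `[0,1]²`. -/
def l2Norm (U : I → I → ℝ) : ℝ := Real.sqrt (∫ p : I × I, (U p.1 p.2) ^ 2)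

/-- The cut distance: `inf` over Lebesgue-measure-preserving `φ : [0,1] → [0,1]`
of `‖W₁ - W₂^φ‖_□`. -/
def cutDist (W₁ W₂ : I → I → ℝ) : ℝ :=
  sInf { r : ℝ | ∃ φ : I → I, MeasurePreserving φ volume volume ∧
    r = cutNorm (fun x y => W₁ x y - W₂ (φ x) (φ y)) }

/-- The δ₁ distance: `inf` over Lebesgue-measure-preserving `φ : [0,1] → [0,1]`
of `‖W₁ - W₂^φ‖_{L¹}`. -/
def delta1 (W₁ W₂ : I → I → ℝ) : ℝ :=
  sInf { r : ℝ | ∃ φ : I → I, MeasurePreserving φ volume volume ∧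
    r = l1Norm (fun x y => W₁ x y - W₂ (φ x) (φ y)) }

/-- A graphon: a symmetric measurable function `[0,1]² → [0,1]`. -/
def IsGraphon (W : I → I → ℝ) : Prop :=
  Measurable (Function.uncurry W) ∧ (∀ x y, W x y = W y x) ∧
    ∀ x y, W x y ∈ Set.Icc (0 : ℝ) 1

open Classical in
/-- The step function associated to a partition `P` of `[0,1]` into `K` measurable
sets and a value matrix `w`. -/
def stepFun {K : ℕ} (P : Fin K → Set I) (w : Fin K → Fin K → ℝ) : I → I → ℝ :=
  fun x y => ∑ k, ∑ k', if x ∈ P k ∧ y ∈ P k' then w k k' else 0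

/-- The `n`-th cell of the equitable partition of `[0,1]` into `N` intervals:
`[n/N, (n+1)/N)`, with the last cell closed at `1`. -/
def eqCell (N : ℕ) (n : Fin N) : Set I :=
  {x : I | ((n : ℕ) : ℝ) / N ≤ (x : ℝ) ∧
    ((x : ℝ) < (((n : ℕ) : ℝ) + 1) / N ∨ (n : ℕ) + 1 = N)}

/-- The step function of a graph with adjacency matrix `A ∈ {0,1}^{N×N}`,
built on the equitable partition of `[0,1]` into `N` intervals. -/
def graphStepFun (N : ℕ) (A : Fin N → Fin N → ℝ) : I → I → ℝ :=
  stepFun (eqCell N) A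

section CellAverage

variable {β κ : Type*} [MeasurableSpace β] {ν : Measure β} {q : β → κ}

/-- The cells are the fibres of `q`; the average over a null cell is `0`. -/
def cellAverage (ν : Measure β) (q : β → κ) (g : β → ℝ) (b : β) : ℝ :=
  ⨍ a in q ⁻¹' {q b}, g a ∂ν

theorem measurableSet_preimage_of_measurableSet_fiber [Countable κ]
    (hq : ∀ k, MeasurableSet (q ⁻¹' {k})) (A : Set κ) : MeasurableSet (q ⁻¹' A) := by
  rw [← Set.biUnion_preimage_singleton]
  exact .biUnion A.to_countable fun k _ => hq k

theorem memLp_comp_of_measurableSet_fiber [Finite κ] [IsFiniteMeasure ν]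
    (hq : ∀ k, MeasurableSet (q ⁻¹' {k})) (c : κ → ℝ) (p : ENNReal) : MemLp (c ∘ q) p ν := by
  obtain ⟨C, hC⟩ := (Set.finite_range fun k => ‖c k‖).bddAbove
  have hmeas : Measurable (c ∘ q) := fun s _ =>
    measurableSet_preimage_of_measurableSet_fiber hq (c ⁻¹' s)
  exact .of_bound hmeas.aestronglyMeasurable C (ae_of_all _ fun b => hC ⟨q b, rfl⟩)

theorem memLp_cellAverage [Finite κ] [IsFiniteMeasure ν] (hq : ∀ k, MeasurableSet (q ⁻¹' {k}))
    (g : β → ℝ) (p : ENNReal) : MemLp (cellAverage ν q g) p ν :=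
  memLp_comp_of_measurableSet_fiber hq (fun k => ⨍ a in q ⁻¹' {k}, g a ∂ν) p

theorem cellAverage_comp_of_injective {κ' : Type*} {e : κ → κ'} (he : e.Injective) (g : β → ℝ) :
    cellAverage ν (e ∘ q) g = cellAverage ν q g := by
  funext b
  simp only [cellAverage, Function.comp_apply, Set.preimage_comp,
    ← Set.image_singleton, he.preimage_image]

theorem setIntegral_cellAverage [IsFiniteMeasure ν] (hq : ∀ k, MeasurableSet (q ⁻¹' {k}))
    (g : β → ℝ) (k : κ) :
    ∫ b in q ⁻¹' {k}, cellAverage ν q g b ∂ν = ∫ b in q ⁻¹' {k}, g b ∂ν := by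
  rw [setIntegral_congr_fun (hq k) (g := fun _ => ⨍ a in q ⁻¹' {k}, g a ∂ν)
      fun b (hb : q b = k) => by rw [cellAverage, hb],
    setIntegral_const, measure_smul_setAverage _ (measure_ne_top _ _)]

theorem integral_mul_comp_eq_sum [Fintype κ] (hq : ∀ k, MeasurableSet (q ⁻¹' {k}))
    {g : β → ℝ} (hg : Integrable g ν) (c : κ → ℝ) :
    ∫ b, g b * c (q b) ∂ν = ∑ k, (∫ b in q ⁻¹' {k}, g b ∂ν) * c k := by
  have hfiber : ∀ k, Set.EqOn (fun b => g b * c (q b)) (fun b => g b * c k) (q ⁻¹' {k}) :=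
    fun k b (hb : q b = k) => by simp only [hb]
  have hcover : (⋃ k, q ⁻¹' {k}) = Set.univ := by
    rw [← Set.preimage_iUnion, Set.iUnion_of_singleton, Set.preimage_univ]
  rw [← setIntegral_univ, ← hcover, integral_iUnion_fintype hq (pairwise_disjoint_fiber q)
    fun k => IntegrableOn.congr_fun ((hg.integrableOn (s := q ⁻¹' {k})).mul_const (c k))
      (hfiber k).symm (hq k)]
  refine Finset.sum_congr rfl fun k _ => ?_
  rw [setIntegral_congr_fun (hq k) (hfiber k), integral_mul_const]

theorem integral_sub_cellAverage_mul_comp [Fintype κ] [IsFiniteMeasure ν]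
    (hq : ∀ k, MeasurableSet (q ⁻¹' {k})) {g : β → ℝ} (hg : Integrable g ν) (c : κ → ℝ) :
    ∫ b, (g b - cellAverage ν q g b) * c (q b) ∂ν = 0 := by
  have havg : Integrable (cellAverage ν q g) ν :=
    memLp_one_iff_integrable.mp (memLp_cellAverage hq g 1)
  rw [integral_mul_comp_eq_sum hq (g := fun b => g b - cellAverage ν q g b) (hg.sub havg)]
  refine Finset.sum_eq_zero fun k _ => ?_
  rw [integral_sub hg.integrableOn havg.integrableOn, setIntegral_cellAverage hq, sub_self,
    zero_mul]

/-- The cell average is the orthogonal projection of `g` onto the functions constant on cells. -/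
theorem integral_sq_sub_comp [Fintype κ] [IsFiniteMeasure ν]
    (hq : ∀ k, MeasurableSet (q ⁻¹' {k})) {g : β → ℝ} (hg : MemLp g 2 ν) (c : κ → ℝ) :
    ∫ b, (g b - c (q b)) ^ 2 ∂ν =
      ∫ b, (g b - cellAverage ν q g b) ^ 2 ∂ν + ∫ b, (cellAverage ν q g b - c (q b)) ^ 2 ∂ν := by
  set d : κ → ℝ := fun k => (⨍ a in q ⁻¹' {k}, g a ∂ν) - c k
  have he : MemLp (fun b => g b - cellAverage ν q g b) 2 ν := hg.sub (memLp_cellAverage hq g 2)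
  have hd : MemLp (d ∘ q) 2 ν := memLp_comp_of_measurableSet_fiber hq d 2
  have hcross : ∫ b, (g b - cellAverage ν q g b) * d (q b) ∂ν = 0 :=
    integral_sub_cellAverage_mul_comp hq (hg.integrable one_le_two) d
  calc ∫ b, (g b - c (q b)) ^ 2 ∂ν
      = ∫ b, ((g b - cellAverage ν q g b) ^ 2 + d (q b) ^ 2
          + 2 * ((g b - cellAverage ν q g b) * d (q b))) ∂ν := by
        congr 1 with b
        simp only [d, cellAverage]
        ring
    _ = _ := by
        have he2 : Integrable (fun b => (g b - cellAverage ν q g b) ^ 2) ν := he.integrable_sq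
        have hd2 : Integrable (fun b => d (q b) ^ 2) ν := hd.integrable_sq
        have hed : Integrable (fun b => 2 * ((g b - cellAverage ν q g b) * d (q b))) ν :=
          (he.integrable_mul hd).const_mul 2
        have hsum : Integrable (fun b => (g b - cellAverage ν q g b) ^ 2 + d (q b) ^ 2) ν :=
          he2.add hd2
        rw [integral_add hsum hed, integral_add he2 hd2, integral_const_mul, hcross]
        simp only [d, cellAverage, mul_zero, add_zero]

theorem integral_sq_sub_cellAverage_le [Fintype κ] [IsFiniteMeasure ν]
    (hq : ∀ k, MeasurableSet (q ⁻¹' {k})) {g : β → ℝ} (hg : MemLp g 2 ν) :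
    ∫ b, (g b - cellAverage ν q g b) ^ 2 ∂ν ≤ ∫ b, g b ^ 2 ∂ν := by
  have h := integral_sq_sub_comp hq hg 0
  simp only [Pi.zero_apply, sub_zero] at h
  have : 0 ≤ ∫ b, cellAverage ν q g b ^ 2 ∂ν := integral_nonneg fun b => sq_nonneg _
  linarith

theorem sq_setIntegral_le_integral_sq [IsProbabilityMeasure ν] {g : β → ℝ} (hg : MemLp g 2 ν)
    {s : Set β} (hs : MeasurableSet s) :
    (∫ b in s, g b ∂ν) ^ 2 ≤ ∫ b, g b ^ 2 ∂ν := by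
  have hvar := ProbabilityTheory.variance_nonneg (s.indicator g) ν
  rw [ProbabilityTheory.variance_eq_sub (hg.indicator hs), integral_indicator hs] at hvar
  have hsq : ∫ b, (s.indicator g ^ 2) b ∂ν ≤ ∫ b, g b ^ 2 ∂ν := by
    refine integral_mono (hg.indicator hs).integrable_sq hg.integrable_sq fun b => ?_
    by_cases hb : b ∈ s <;> simp [Set.indicator, hb, sq_nonneg]
  linarith

/-- The energy increment: the partition by `q` refines the one by `r ∘ q`. -/
theorem integral_sq_sub_cellAverage_add_sq_le {κ' : Type*} [Fintype κ] [IsProbabilityMeasure ν]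
    (hq : ∀ k, MeasurableSet (q ⁻¹' {k})) (r : κ → κ') {g : β → ℝ} (hg : MemLp g 2 ν)
    (A : Set κ) :
    ∫ b, (g b - cellAverage ν q g b) ^ 2 ∂ν
        + (∫ b in q ⁻¹' A, (g b - cellAverage ν (r ∘ q) g b) ∂ν) ^ 2 ≤
      ∫ b, (g b - cellAverage ν (r ∘ q) g b) ^ 2 ∂ν := by
  set s := q ⁻¹' A
  have hs : MeasurableSet s := measurableSet_preimage_of_measurableSet_fiber hq A
  have hfine : MemLp (cellAverage ν q g) 2 ν := memLp_cellAverage hq g 2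
  have hcoarse : MemLp (cellAverage ν (r ∘ q) g) 2 ν :=
    memLp_comp_of_measurableSet_fiber hq (fun k => ⨍ a in (r ∘ q) ⁻¹' {r k}, g a ∂ν) 2
  have hpyth : ∫ b, (g b - cellAverage ν (r ∘ q) g b) ^ 2 ∂ν =
      ∫ b, (g b - cellAverage ν q g b) ^ 2 ∂ν
        + ∫ b, (cellAverage ν q g b - cellAverage ν (r ∘ q) g b) ^ 2 ∂ν :=
    integral_sq_sub_comp hq hg fun k => ⨍ a in (r ∘ q) ⁻¹' {r k}, g a ∂ν
  have horth : ∫ b in s, (g b - cellAverage ν q g b) ∂ν = 0 := by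
    rw [← integral_sub_cellAverage_mul_comp hq (hg.integrable one_le_two) (A.indicator 1),
      ← integral_indicator hs]
    congr 1 with b
    by_cases hb : q b ∈ A <;> simp [s, hb]
  have hsplit : ∫ b in s, (g b - cellAverage ν (r ∘ q) g b) ∂ν =
      ∫ b in s, (cellAverage ν q g b - cellAverage ν (r ∘ q) g b) ∂ν := by
    have he : Integrable (fun b => g b - cellAverage ν q g b) ν :=
      (hg.sub hfine).integrable one_le_two
    have hd : Integrable (fun b => cellAverage ν q g b - cellAverage ν (r ∘ q) g b) ν :=
      (hfine.sub hcoarse).integrable one_le_two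
    calc ∫ b in s, (g b - cellAverage ν (r ∘ q) g b) ∂ν
        = ∫ b in s, ((g b - cellAverage ν q g b)
            + (cellAverage ν q g b - cellAverage ν (r ∘ q) g b)) ∂ν := by
          congr 1 with b; ring
      _ = _ := by
          rw [integral_add he.integrableOn hd.integrableOn, horth, zero_add]
  have hcs := sq_setIntegral_le_integral_sq
    (g := fun b => cellAverage ν q g b - cellAverage ν (r ∘ q) g b) (hfine.sub hcoarse) hs
  rw [hsplit]
  linarith

end CellAverage

theorem setAverage_mem_of_forall_mem {α E : Type*} [MeasurableSpace α] {μ : Measure α}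
    [IsFiniteMeasure μ] [NormedAddCommGroup E] [NormedSpace ℝ E] [CompleteSpace E] {t : Set E}
    (ht : Convex ℝ t) (htc : IsClosed t) (h0 : 0 ∈ t) {f : α → E} (hf : Integrable f μ)
    (hft : ∀ a, f a ∈ t) (s : Set α) : ⨍ a in s, f a ∂μ ∈ t := by
  rcases eq_or_ne (μ s) 0 with hs | hs
  · simpa [setAverage_eq, measureReal_def, hs] using h0
  · exact ht.set_average_mem htc hs (measure_ne_top _ _) (ae_of_all _ fun a => hft a)
      hf.integrableOn

theorem setAverage_prod_swap {α : Type*} [MeasurableSpace α] {μ : Measure α} [SFinite μ]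
    {W : α → α → ℝ} (hW : ∀ x y, W x y = W y x) (s t : Set α) :
    ⨍ p in s ×ˢ t, W p.1 p.2 ∂μ.prod μ = ⨍ p in t ×ˢ s, W p.1 p.2 ∂μ.prod μ := by
  rw [setAverage_eq, setAverage_eq, measureReal_prod_prod, measureReal_prod_prod, mul_comm,
    ← setIntegral_prod_swap s t]
  simp only [Prod.fst_swap, Prod.snd_swap, hW]

theorem cutNorm_le {U : I → I → ℝ} {c : ℝ} (hc : 0 ≤ c)
    (h : ∀ S T, MeasurableSet S → MeasurableSet T → |∫ p in S ×ˢ T, U p.1 p.2| ≤ c) :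
    cutNorm U ≤ c :=
  Real.sSup_le (by rintro _ ⟨S, T, hS, hT, rfl⟩; exact h S T hS hT) hc

theorem exists_lt_abs_setIntegral_of_lt_cutNorm {U : I → I → ℝ} {c : ℝ} (h : c < cutNorm U) :
    ∃ S T, MeasurableSet S ∧ MeasurableSet T ∧ c < |∫ p in S ×ˢ T, U p.1 p.2| := by
  obtain ⟨_, ⟨S, T, hS, hT, rfl⟩, hc⟩ :=
    exists_lt_of_lt_csSup (by exact ⟨_, ∅, ∅, .empty, .empty, rfl⟩) h
  exact ⟨S, T, hS, hT, hc⟩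

theorem cutNorm_le_l2Norm {U : I → I → ℝ} (hU : MemLp (Function.uncurry U) 2 volume) :
    cutNorm U ≤ l2Norm U :=
  cutNorm_le (Real.sqrt_nonneg _) fun S T hS hT => by
    rw [← Real.sqrt_sq_eq_abs]
    exact Real.sqrt_le_sqrt (sq_setIntegral_le_integral_sq hU (hS.prod hT))

theorem IsGraphon.memLp {W : I → I → ℝ} (hW : IsGraphon W) {μ : Measure (I × I)}
    [IsFiniteMeasure μ] (p : ENNReal) : MemLp (Function.uncurry W) p μ :=
  memLp_of_bounded (ae_of_all _ fun x : I × I => hW.2.2 x.1 x.2) hW.1.aestronglyMeasurable p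

section StepAverage

variable {ι : Type*}

/-- The step function `W_P` for `P` the partition of `I` into the fibres of `π`. -/
def stepAverage (W : I → I → ℝ) (π : I → ι) : I → I → ℝ :=
  fun x y => cellAverage volume (Prod.map π π) (Function.uncurry W) (x, y)

theorem stepAverage_apply (W : I → I → ℝ) (π : I → ι) (x y : I) :
    stepAverage W π x y = ⨍ p in (π ⁻¹' {π x}) ×ˢ (π ⁻¹' {π y}), W p.1 p.2 := by
  rw [stepAverage, cellAverage, Prod.map_apply, ← Set.singleton_prod_singleton,
    Set.preimage_prod_map_prod]
  rfl

theorem measurableSet_prodMap_fiber {π : I → ι} (hπ : ∀ k, MeasurableSet (π ⁻¹' {k}))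
    (k : ι × ι) : MeasurableSet (Prod.map π π ⁻¹' {k}) := by
  rw [← Prod.mk.eta (p := k), ← Set.singleton_prod_singleton, Set.preimage_prod_map_prod]
  exact (hπ k.1).prod (hπ k.2)

theorem stepFun_fiber {K : ℕ} (π : I → Fin K) (w : Fin K → Fin K → ℝ) (x y : I) :
    stepFun (fun k => π ⁻¹' {k}) w x y = w (π x) (π y) := by
  simp [stepFun, ite_and, Finset.sum_ite_eq]

end StepAverage

section Iteration

variable {W : I → I → ℝ}

theorem exists_refinement_integral_sq_sub_stepAverage_le {ι : Type*} [Fintype ι]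
    (hW : MemLp (Function.uncurry W) 2 volume) {π : I → ι}
    (hπ : ∀ k, MeasurableSet (π ⁻¹' {k})) {S T : Set I} (hS : MeasurableSet S)
    (hT : MeasurableSet T) :
    ∃ π' : I → ι × Bool × Bool, (∀ k, MeasurableSet (π' ⁻¹' {k})) ∧
      (∫ p : I × I, (W p.1 p.2 - stepAverage W π' p.1 p.2) ^ 2)
          + (∫ p in S ×ˢ T, (W p.1 p.2 - stepAverage W π p.1 p.2)) ^ 2 ≤
        ∫ p : I × I, (W p.1 p.2 - stepAverage W π p.1 p.2) ^ 2 := by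
  classical
  set π' : I → ι × Bool × Bool := fun x => (π x, decide (x ∈ S), decide (x ∈ T))
  have hπ' : ∀ k, MeasurableSet (π' ⁻¹' {k}) := by
    rintro ⟨k, a, b⟩
    cases a <;> cases b <;> simp only [π', Set.preimage, Set.mem_singleton_iff, Prod.mk.injEq,
      decide_eq_true_eq, decide_eq_false_iff_not, Set.ofPred_and] <;>
      exact (hπ k).inter (.inter (by first | exact hS | exact hS.compl)
        (by first | exact hT | exact hT.compl))
  have hST : Prod.map π' π' ⁻¹' {k | k.1.2.1 = true ∧ k.2.2.2 = true} = S ×ˢ T := by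
    ext p; simp [π']
  have key := integral_sq_sub_cellAverage_add_sq_le (measurableSet_prodMap_fiber hπ')
    (Prod.map Prod.fst Prod.fst) hW {k | k.1.2.1 = true ∧ k.2.2.2 = true}
  have hcoarse : Prod.map Prod.fst Prod.fst ∘ Prod.map π' π' = Prod.map π π := rfl
  rw [hST, hcoarse] at key
  exact ⟨π', hπ', key⟩

theorem exists_partition_cutNorm_le_or (hW : MemLp (Function.uncurry W) 2 volume) {ε : ℝ}
    (hε : 0 ≤ ε) (m : ℕ) :
    ∃ (ι : Type) (_ : Fintype ι) (π : I → ι), (∀ k, MeasurableSet (π ⁻¹' {k})) ∧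
      Fintype.card ι ≤ 4 ^ m ∧
      (cutNorm (fun x y => W x y - stepAverage W π x y) ≤ ε ∨
        (∫ p : I × I, (W p.1 p.2 - stepAverage W π p.1 p.2) ^ 2) + m * ε ^ 2 ≤
          ∫ p : I × I, W p.1 p.2 ^ 2) := by
  induction m with
  | zero =>
    refine ⟨Unit, inferInstance, fun _ => (), fun _ => by simp, by simp, .inr ?_⟩
    rw [Nat.cast_zero, zero_mul, add_zero]
    exact integral_sq_sub_cellAverage_le
      (measurableSet_prodMap_fiber (π := fun _ : I => ()) fun _ => by simp) hW
  | succ m ih =>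
    obtain ⟨ι, _, π, hπ, hcard, hdone⟩ := ih
    by_cases hcut : cutNorm (fun x y => W x y - stepAverage W π x y) ≤ ε
    · exact ⟨ι, _, π, hπ, hcard.trans (Nat.pow_le_pow_right (by norm_num) m.le_succ), .inl hcut⟩
    have hdefect := hdone.resolve_left hcut
    obtain ⟨S, T, hS, hT, hST⟩ := exists_lt_abs_setIntegral_of_lt_cutNorm (not_le.mp hcut)
    obtain ⟨π', hπ', hdecrease⟩ :=
      exists_refinement_integral_sq_sub_stepAverage_le hW hπ hS hT
    refine ⟨ι × Bool × Bool, inferInstance, π', hπ', ?_, .inr ?_⟩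
    · simp only [Fintype.card_prod, Fintype.card_bool, pow_succ]
      omega
    · have hsq : ε ^ 2 ≤ (∫ p in S ×ˢ T, (W p.1 p.2 - stepAverage W π p.1 p.2)) ^ 2 :=
        (pow_le_pow_left₀ hε hST.le 2).trans_eq (sq_abs _)
      push_cast
      linarith

theorem exists_partition_cutNorm_le (hW : MemLp (Function.uncurry W) 2 volume) {ε : ℝ}
    (hε : 0 ≤ ε) {m : ℕ} (hm : ∫ p : I × I, W p.1 p.2 ^ 2 ≤ (m + 1) * ε ^ 2) :
    ∃ (ι : Type) (_ : Fintype ι) (π : I → ι), (∀ k, MeasurableSet (π ⁻¹' {k})) ∧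
      Fintype.card ι ≤ 4 ^ m ∧ cutNorm (fun x y => W x y - stepAverage W π x y) ≤ ε := by
  obtain ⟨ι, _, π, hπ, hcard, hcut | hdefect⟩ := exists_partition_cutNorm_le_or hW hε m
  · exact ⟨ι, _, π, hπ, hcard, hcut⟩
  refine ⟨ι, _, π, hπ, hcard, (cutNorm_le_l2Norm ?_).trans ?_⟩
  · exact hW.sub (memLp_cellAverage (measurableSet_prodMap_fiber hπ) _ 2)
  · rw [l2Norm, Real.sqrt_le_left hε]
    linarith

end Iteration

theorem exists_fin_stepAverage_eq {ι : Type*} [Fintype ι] {K : ℕ} (hcard : Fintype.card ι ≤ K)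
    (W : I → I → ℝ) {π : I → ι} (hπ : ∀ k, MeasurableSet (π ⁻¹' {k})) :
    ∃ π' : I → Fin K, (∀ k, MeasurableSet (π' ⁻¹' {k})) ∧ stepAverage W π' = stepAverage W π := by
  obtain ⟨e⟩ := Function.Embedding.nonempty_of_card_le (hcard.trans_eq (Fintype.card_fin K).symm)
  refine ⟨e ∘ π, fun k => measurableSet_preimage_of_measurableSet_fiber hπ (e ⁻¹' {k}), ?_⟩
  funext x y
  simp only [stepAverage, ← Prod.map_comp_map,
    cellAverage_comp_of_injective (e.injective.prodMap e.injective)]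

theorem log_le_four_mul_natLog_four_succ (K : ℕ) : Real.log K ≤ 4 * (Nat.log 4 K + 1) := by
  rcases K.eq_zero_or_pos with rfl | hK
  · simp only [CharP.cast_eq_zero, Real.log_zero]
    positivity
  have hlt : (K : ℝ) < 4 ^ (Nat.log 4 K + 1) := by
    exact_mod_cast Nat.lt_pow_succ_log_self (by norm_num) K
  have hlog4 : Real.log 4 ≤ 4 := by
    linarith [Real.log_le_sub_one_of_pos (by norm_num : (0 : ℝ) < 4)]
  calc Real.log K ≤ Real.log (4 ^ (Nat.log 4 K + 1)) :=
        Real.log_le_log (by exact_mod_cast hK) hlt.le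
    _ = (Nat.log 4 K + 1) * Real.log 4 := by rw [Real.log_pow]; push_cast; ring
    _ ≤ 4 * (Nat.log 4 K + 1) := by nlinarith

theorem le_natLog_four_succ_mul_sq {K : ℕ} (hK : 2 ≤ K) {X : ℝ} (hX : 0 ≤ X) :
    X ≤ (Nat.log 4 K + 1) * (2 / Real.sqrt (Real.log K) * Real.sqrt X) ^ 2 := by
  have hlog : 0 < Real.log K := Real.log_pos (by exact_mod_cast hK)
  rw [mul_pow, div_pow, Real.sq_sqrt hlog.le, Real.sq_sqrt hX, ← mul_assoc, ← mul_div_assoc]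
  refine le_mul_of_one_le_left hX ((one_le_div hlog).mpr ?_)
  linarith [log_le_four_mul_natLog_four_succ K]

/-- Weak Regularity Lemma (cut-norm form). -/
theorem weak_regularity_cutNorm (W : I → I → ℝ) (hW : IsGraphon W)
    (K : ℕ) (hK : 2 ≤ K) :
    ∃ (P : Fin K → Set I) (w : Fin K → Fin K → ℝ),
      (∀ k, MeasurableSet (P k)) ∧
      Pairwise (Function.onFun Disjoint P) ∧
      (⋃ k, P k) = Set.univ ∧
      (∀ k k', w k k' ∈ Set.Icc (0 : ℝ) 1) ∧
      (∀ k k', w k k' = w k' k) ∧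
      cutNorm (fun x y => W x y - stepFun P w x y) ≤
        2 / Real.sqrt (Real.log K) * l2Norm W := by
  obtain ⟨ι, _, π, hπ, hcard, hcut⟩ := exists_partition_cutNorm_le (hW.memLp 2)
    (mul_nonneg (by positivity) (Real.sqrt_nonneg _))
    (le_natLog_four_succ_mul_sq hK (integral_nonneg fun p => sq_nonneg (W p.1 p.2)))
  obtain ⟨π', hπ', hstep⟩ :=
    exists_fin_stepAverage_eq (hcard.trans (Nat.pow_log_le_self 4 (by omega))) W hπ
  set P : Fin K → Set I := fun k => π' ⁻¹' {k}
  set w : Fin K → Fin K → ℝ := fun k k' => ⨍ p in P k ×ˢ P k', W p.1 p.2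
  have hstepFun : stepFun P w = stepAverage W π := by
    funext x y
    rw [stepFun_fiber, ← hstep, stepAverage_apply]
  refine ⟨P, w, hπ', pairwise_disjoint_fiber π', ?_, fun k k' => ?_,
    fun k k' => setAverage_prod_swap hW.2.1 _ _, hstepFun ▸ hcut⟩
  · rw [← Set.preimage_iUnion, Set.iUnion_of_singleton, Set.preimage_univ]
  · exact setAverage_mem_of_forall_mem (convex_Icc 0 1) isClosed_Icc (by simp)
      ((hW.memLp 1).integrable le_rfl) (fun p => hW.2.2 p.1 p.2) _
end
end

section
/- Let P = (P₁, …, P_I) and Q = (Q₁, …, Q_J) be partitions of [0,1] into Lebesgue-measurable sets, with μ_i = λ(P_i) and ν_j = λ(Q_j), and let W₁ and W₂ be step functions with symmetric value matrices (w_{1,ij}) ∈ [0,1]^{I×I} on P and (w_{2,i'j'}) ∈ [0,1]^{J×J} on Q respectively. Then the infimum over all probability measures π on [0,1] × [0,1] whose two marginals are both the Lebesgue measure of ∫∫ |W₁(x,y) − W₂(x',y')| dπ(x,x') dπ(y,y') equals the minimum over coupling matrices T ∈ Π(μ, ν) of Σ_{i,j,i',j'} |w_{1,ij} − w_{2,i'j'}|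 T_{ii'} T_{jj'}, and this minimum is attained. -/
open MeasureTheory unitInterval

noncomputable section

/-! Both sides are computed on the cells `P i ×ˢ Q j`. Any coupling `π` of Lebesgue measure with
itself gives the coupling matrix `T i j = π (P i ×ˢ Q j)`, and since the integrand is constant on
products of such cells, the double integral is the quadratic cost of `T`. Conversely every coupling
matrix `T` is realised by the measure that spreads the mass `T i j` over `P i ×ˢ Q j` as a product
of normalised restrictions of Lebesgue measure. So the set of values of the integral is the image
of the compact polytope of coupling matrices under the continuous cost, whose infimum is attained. -/

open ProbabilityTheory

structure IsMeasurablePartition {α ι : Type*} [MeasurableSpace α] (P : ι → Set α) : Prop where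
  measurableSet : ∀ i, MeasurableSet (P i)
  pairwise_disjoint : Pairwise (Function.onFun Disjoint P)
  iUnion_eq_univ : ⋃ i, P i = Set.univ

namespace IsMeasurablePartition

variable {α β ι κ : Type*} [MeasurableSpace α] [MeasurableSpace β] {P : ι → Set α}
  {Q : κ → Set β}

theorem exists_mem (hP : IsMeasurablePartition P) (x : α) : ∃ i, x ∈ P i :=
  Set.mem_iUnion.mp (hP.iUnion_eq_univ ▸ Set.mem_univ x)

theorem eq_of_mem (hP : IsMeasurablePartition P) {x : α} {i j : ι} (hi : x ∈ P i)
    (hj : x ∈ P j) : i = j := by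
  by_contra h
  exact Set.disjoint_left.mp (hP.pairwise_disjoint h) hi hj

theorem preimage (hP : IsMeasurablePartition P) {f : β → α} (hf : Measurable f) :
    IsMeasurablePartition fun i => f ⁻¹' P i where
  measurableSet i := hf (hP.measurableSet i)
  pairwise_disjoint _ _ h := (hP.pairwise_disjoint h).preimage f
  iUnion_eq_univ := by rw [← Set.preimage_iUnion, hP.iUnion_eq_univ, Set.preimage_univ]

theorem prod (hP : IsMeasurablePartition P) (hQ : IsMeasurablePartition Q) :
    IsMeasurablePartition fun k : ι × κ => P k.1 ×ˢ Q k.2 where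
  measurableSet k := (hP.measurableSet k.1).prod (hQ.measurableSet k.2)
  pairwise_disjoint k l h := by
    rcases not_and_or.mp (Prod.ext_iff.not.mp h) with h | h
    · exact Set.disjoint_prod.mpr (Or.inl (hP.pairwise_disjoint h))
    · exact Set.disjoint_prod.mpr (Or.inr (hQ.pairwise_disjoint h))
  iUnion_eq_univ := by
    rw [← Set.univ_prod_univ, ← hP.iUnion_eq_univ, ← hQ.iUnion_eq_univ, Set.iUnion_prod]

theorem cond_apply_of_ne (hP : IsMeasurablePartition P) (μ : Measure α) {i j : ι} (hij : i ≠ j) :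
    μ[P j|P i] = 0 := by
  rw [cond_apply (hP.measurableSet i), Set.disjoint_iff_inter_eq_empty.mp
    (hP.pairwise_disjoint hij), measure_empty, mul_zero]

variable [Fintype ι]

theorem sum_measure_inter (hP : IsMeasurablePartition P) (μ : Measure α) {s : Set α}
    (hs : MeasurableSet s) : ∑ i, μ (s ∩ P i) = μ s := by
  rw [← tsum_fintype (L := .unconditional ι), ← measure_iUnion, ← Set.inter_iUnion,
    hP.iUnion_eq_univ, Set.inter_univ]
  · exact fun i j h => (hP.pairwise_disjoint h).mono Set.inter_subset_right Set.inter_subset_right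
  · exact fun i => hs.inter (hP.measurableSet i)

theorem sum_measureReal_inter (hP : IsMeasurablePartition P) (μ : Measure α) [IsFiniteMeasure μ]
    {s : Set α} (hs : MeasurableSet s) : ∑ i, μ.real (s ∩ P i) = μ.real s := by
  simp only [Measure.real]
  rw [← ENNReal.toReal_sum fun i _ => measure_ne_top μ _, hP.sum_measure_inter μ hs]

theorem integral_eq_sum (hP : IsMeasurablePartition P) (μ : Measure α) [IsFiniteMeasure μ]
    {f : α → ℝ} {c : ι → ℝ} (hf : ∀ i, ∀ x ∈ P i, f x = c i) :
    ∫ x, f x ∂μ = ∑ i, c i * μ.real (P i) := by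
  classical
  have hf_eq : f = fun x => ∑ i, (P i).indicator (fun _ => c i) x := by
    funext x
    obtain ⟨i, hi⟩ := hP.exists_mem x
    rw [Finset.sum_eq_single i (fun j _ hj => Set.indicator_of_notMem
      (fun hj' => hj (hP.eq_of_mem hj' hi)) _) (by simp), Set.indicator_of_mem hi, hf i x hi]
  rw [hf_eq, integral_finsetSum _ fun i _ => (integrable_const _).indicator (hP.measurableSet i)]
  simp only [integral_indicator_const _ (hP.measurableSet _), smul_eq_mul, mul_comm]

end IsMeasurablePartition

section CouplingMatrix

variable {ι κ : Type*} [Fintype ι] [Fintype κ]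

def couplingMatrices (μ : ι → ℝ) (ν : κ → ℝ) : Set (ι → κ → ℝ) :=
  {T | (∀ i j, 0 ≤ T i j) ∧ (∀ i, ∑ j, T i j = μ i) ∧ (∀ j, ∑ i, T i j = ν j)}

variable {μ : ι → ℝ} {ν : κ → ℝ} {T : ι → κ → ℝ}

theorem le_left_of_mem_couplingMatrices (hT : T ∈ couplingMatrices μ ν) (i : ι) (j : κ) :
    T i j ≤ μ i :=
  hT.2.1 i ▸ Finset.single_le_sum (fun k _ => hT.1 i k) (Finset.mem_univ j)

theorem le_right_of_mem_couplingMatrices (hT : T ∈ couplingMatrices μ ν) (i : ι) (j : κ) :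
    T i j ≤ ν j :=
  hT.2.2 j ▸ Finset.single_le_sum (fun k _ => hT.1 k j) (Finset.mem_univ i)

theorem mul_mem_couplingMatrices (hμ : ∀ i, 0 ≤ μ i) (hν : ∀ j, 0 ≤ ν j) (hμ₁ : ∑ i, μ i = 1)
    (hν₁ : ∑ j, ν j = 1) : (fun i j => μ i * ν j) ∈ couplingMatrices μ ν :=
  ⟨fun i j => mul_nonneg (hμ i) (hν j), fun i => by rw [← Finset.mul_sum, hν₁, mul_one],
    fun j => by rw [← Finset.sum_mul, hμ₁, one_mul]⟩

theorem isCompact_couplingMatrices (μ : ι → ℝ) (ν : κ → ℝ) :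
    IsCompact (couplingMatrices μ ν) := by
  have hclosed : IsClosed (couplingMatrices μ ν) := by
    simp only [couplingMatrices, Set.ofPred_and, Set.ofPred_forall]
    refine .inter (isClosed_iInter fun i => isClosed_iInter fun j => ?_)
      (.inter (isClosed_iInter fun i => ?_) (isClosed_iInter fun j => ?_))
    · exact isClosed_le continuous_const (by fun_prop)
    · exact isClosed_eq (by fun_prop) continuous_const
    · exact isClosed_eq (by fun_prop) continuous_const
  refine isCompact_Icc.of_isClosed_subset hclosed (s := Set.Icc 0 fun i _ => μ i) fun T hT => ?_
  exact ⟨fun i j => hT.1 i j, fun i j => le_left_of_mem_couplingMatrices hT i j⟩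

def gromovWassersteinCost (w₁ : ι → ι → ℝ) (w₂ : κ → κ → ℝ) (T : ι → κ → ℝ) : ℝ :=
  ∑ i, ∑ j, ∑ i', ∑ j', |w₁ i j - w₂ i' j'| * (T i i' * T j j')

theorem continuous_gromovWassersteinCost (w₁ : ι → ι → ℝ) (w₂ : κ → κ → ℝ) :
    Continuous (gromovWassersteinCost w₁ w₂) := by
  unfold gromovWassersteinCost
  fun_prop

end CouplingMatrix

theorem ofReal_mul_cond_self {α : Type*} [MeasurableSpace α] {μ : Measure α} [IsFiniteMeasure μ]
    {x : ℝ} {s : Set α} (hx : x ≤ μ.real s) :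
    ENNReal.ofReal x * μ[s|s] = ENNReal.ofReal x := by
  by_cases hs : μ s = 0
  · rw [ENNReal.ofReal_of_nonpos (by simpa [Measure.real, hs] using hx), zero_mul]
  · rw [cond_apply_self hs (measure_ne_top μ s), mul_one]

section CouplingMeasure

variable {α β ι κ : Type*} [MeasurableSpace α] [MeasurableSpace β] [Fintype ι] [Fintype κ]
  {μ : Measure α} {ν : Measure β} {P : ι → Set α} {Q : κ → Set β}

theorem measureReal_prod_mem_couplingMatrices (hP : IsMeasurablePartition P)
    (hQ : IsMeasurablePartition Q) {π : Measure (α × β)} [IsFiniteMeasure π]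
    (hπ₁ : π.map Prod.fst = μ) (hπ₂ : π.map Prod.snd = ν) :
    (fun i j => π.real (P i ×ˢ Q j)) ∈
      couplingMatrices (fun i => μ.real (P i)) (fun j => ν.real (Q j)) := by
  refine ⟨fun i j => measureReal_nonneg, fun i => ?_, fun j => ?_⟩
  · simp only [Set.prod_eq]
    rw [(hQ.preimage measurable_snd).sum_measureReal_inter π (measurable_fst (hP.measurableSet i)),
      ← hπ₁, map_measureReal_apply measurable_fst (hP.measurableSet i)]
  · simp only [Set.prod_eq, Set.inter_comm (Prod.fst ⁻¹' _)]
    rw [(hP.preimage measurable_fst).sum_measureReal_inter π (measurable_snd (hQ.measurableSet j)),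
      ← hπ₂, map_measureReal_apply measurable_snd (hQ.measurableSet j)]

def couplingMeasure (μ : Measure α) (ν : Measure β) (P : ι → Set α) (Q : κ → Set β)
    (T : ι → κ → ℝ) : Measure (α × β) :=
  ∑ i, ∑ j, ENNReal.ofReal (T i j) • (μ[|P i]).prod (ν[|Q j])

theorem couplingMeasure_prod (T : ι → κ → ℝ) (s : Set α) (t : Set β) :
    couplingMeasure μ ν P Q T (s ×ˢ t) =
      ∑ i, ∑ j, ENNReal.ofReal (T i j) * (μ[s|P i] * ν[t|Q j]) := by
  simp only [couplingMeasure, Measure.coe_finsetSum, Finset.sum_apply, Measure.smul_apply,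
    Measure.prod_prod, smul_eq_mul]

variable [IsFiniteMeasure μ] [IsFiniteMeasure ν] {T : ι → κ → ℝ}

theorem map_fst_couplingMeasure (hP : IsMeasurablePartition P) (hQ : IsMeasurablePartition Q)
    (hT : T ∈ couplingMatrices (fun i => μ.real (P i)) (fun j => ν.real (Q j))) :
    (couplingMeasure μ ν P Q T).map Prod.fst = μ := by
  ext s hs
  rw [Measure.map_apply measurable_fst hs, ← Set.prod_univ, couplingMeasure_prod]
  calc ∑ i, ∑ j, ENNReal.ofReal (T i j) * (μ[s|P i] * ν[Set.univ|Q j])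
      = ∑ i, (∑ j, ENNReal.ofReal (T i j)) * μ[s|P i] := by
        refine Finset.sum_congr rfl fun i _ => ?_
        rw [Finset.sum_mul]
        refine Finset.sum_congr rfl fun j _ => ?_
        rw [← cond_inter_self (hQ.measurableSet j), Set.inter_univ, mul_left_comm,
          ofReal_mul_cond_self (le_right_of_mem_couplingMatrices hT i j), mul_comm]
    _ = ∑ i, μ[s|P i] * μ (P i) := by
        refine Finset.sum_congr rfl fun i _ => ?_
        rw [← ENNReal.ofReal_sum_of_nonneg fun j _ => hT.1 i j, hT.2.1 i, ofReal_measureReal,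
          mul_comm]
    _ = μ s := by
        simp only [cond_mul_eq_inter (hP.measurableSet _), Set.inter_comm (P _)]
        exact hP.sum_measure_inter μ hs

theorem map_snd_couplingMeasure (hP : IsMeasurablePartition P) (hQ : IsMeasurablePartition Q)
    (hT : T ∈ couplingMatrices (fun i => μ.real (P i)) (fun j => ν.real (Q j))) :
    (couplingMeasure μ ν P Q T).map Prod.snd = ν := by
  ext t ht
  rw [Measure.map_apply measurable_snd ht, ← Set.univ_prod, couplingMeasure_prod, Finset.sum_comm]
  calc ∑ j, ∑ i, ENNReal.ofReal (T i j) * (μ[Set.univ|P i] * ν[t|Q j])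
      = ∑ j, (∑ i, ENNReal.ofReal (T i j)) * ν[t|Q j] := by
        refine Finset.sum_congr rfl fun j _ => ?_
        rw [Finset.sum_mul]
        refine Finset.sum_congr rfl fun i _ => ?_
        rw [← cond_inter_self (hP.measurableSet i), Set.inter_univ, ← mul_assoc,
          ofReal_mul_cond_self (le_left_of_mem_couplingMatrices hT i j)]
    _ = ∑ j, ν[t|Q j] * ν (Q j) := by
        refine Finset.sum_congr rfl fun j _ => ?_
        rw [← ENNReal.ofReal_sum_of_nonneg fun i _ => hT.1 i j, hT.2.2 j, ofReal_measureReal,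
          mul_comm]
    _ = ν t := by
        simp only [cond_mul_eq_inter (hQ.measurableSet _), Set.inter_comm (Q _)]
        exact hQ.sum_measure_inter ν ht

theorem couplingMeasure_real_prod (hP : IsMeasurablePartition P) (hQ : IsMeasurablePartition Q)
    (hT : T ∈ couplingMatrices (fun i => μ.real (P i)) (fun j => ν.real (Q j))) (i : ι) (j : κ) :
    (couplingMeasure μ ν P Q T).real (P i ×ˢ Q j) = T i j := by
  rw [Measure.real, couplingMeasure_prod, Finset.sum_eq_single i, Finset.sum_eq_single j]
  · rw [← mul_assoc, ofReal_mul_cond_self (le_left_of_mem_couplingMatrices hT i j),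
      ofReal_mul_cond_self (le_right_of_mem_couplingMatrices hT i j),
      ENNReal.toReal_ofReal (hT.1 i j)]
  · intro j' _ hj'
    rw [hQ.cond_apply_of_ne ν hj', mul_zero, mul_zero]
  · simp
  · intro i' _ hi'
    simp [hP.cond_apply_of_ne μ hi']
  · simp

end CouplingMeasure

section StepFunction

variable {nI nJ : ℕ} {P : Fin nI → Set I} {Q : Fin nJ → Set I}

theorem stepFun_eq_of_mem (hP : IsMeasurablePartition P) (w : Fin nI → Fin nI → ℝ) {x y : I}
    {i j : Fin nI} (hx : x ∈ P i) (hy : y ∈ P j) : stepFun P w x y = w i j := by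
  classical
  rw [stepFun, Finset.sum_eq_single i, Finset.sum_eq_single j, if_pos ⟨hx, hy⟩]
  · exact fun j' _ hj' => if_neg fun h => hj' (hP.eq_of_mem h.2 hy)
  · simp
  · exact fun i' _ hi' => Finset.sum_eq_zero fun _ _ => if_neg fun h => hi' (hP.eq_of_mem h.1 hx)
  · simp

theorem integral_abs_stepFun_sub_stepFun (hP : IsMeasurablePartition P)
    (hQ : IsMeasurablePartition Q) (w₁ : Fin nI → Fin nI → ℝ) (w₂ : Fin nJ → Fin nJ → ℝ)
    (π : Measure (I × I)) [IsFiniteMeasure π] :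
    ∫ q : (I × I) × (I × I), |stepFun P w₁ q.1.1 q.2.1 - stepFun Q w₂ q.1.2 q.2.2| ∂(π.prod π) =
      gromovWassersteinCost w₁ w₂ fun i j => π.real (P i ×ˢ Q j) := by
  rw [((hP.prod hQ).prod (hP.prod hQ)).integral_eq_sum (π.prod π)
    (c := fun k => |w₁ k.1.1 k.2.1 - w₂ k.1.2 k.2.2|)]
  · simp only [measureReal_prod_prod, gromovWassersteinCost, Fintype.sum_prod_type]
    exact Finset.sum_congr rfl fun i _ => Finset.sum_comm
  · rintro ⟨⟨i, i'⟩, j, j'⟩ ⟨⟨x, x'⟩, y, y'⟩ ⟨⟨hx, hx'⟩, hy, hy'⟩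
    rw [stepFun_eq_of_mem hP w₁ hx hy, stepFun_eq_of_mem hQ w₂ hx' hy']

theorem setOf_integral_coupling_eq_image_gromovWassersteinCost (hP : IsMeasurablePartition P)
    (hQ : IsMeasurablePartition Q) (w₁ : Fin nI → Fin nI → ℝ) (w₂ : Fin nJ → Fin nJ → ℝ)
    (μ ν : Measure I) [IsProbabilityMeasure μ] [IsFiniteMeasure ν] :
    { r : ℝ | ∃ π : Measure (I × I), IsProbabilityMeasure π ∧
        π.map Prod.fst = μ ∧ π.map Prod.snd = ν ∧
        r = ∫ q : (I × I) × (I × I),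
          |stepFun P w₁ q.1.1 q.2.1 - stepFun Q w₂ q.1.2 q.2.2| ∂(π.prod π) } =
      gromovWassersteinCost w₁ w₂ ''
        couplingMatrices (fun i => μ.real (P i)) (fun j => ν.real (Q j)) := by
  ext r
  constructor
  · rintro ⟨π, hπ, hπ₁, hπ₂, rfl⟩
    exact ⟨_, measureReal_prod_mem_couplingMatrices hP hQ hπ₁ hπ₂,
      (integral_abs_stepFun_sub_stepFun hP hQ w₁ w₂ π).symm⟩
  · rintro ⟨T, hT, rfl⟩
    have hπ₁ := map_fst_couplingMeasure hP hQ hT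
    have hπ : IsProbabilityMeasure (couplingMeasure μ ν P Q T) := by
      have : IsProbabilityMeasure ((couplingMeasure μ ν P Q T).map Prod.fst) := by
        rw [hπ₁]; infer_instance
      exact Measure.isProbabilityMeasure_of_map Prod.fst
    refine ⟨_, hπ, hπ₁, map_snd_couplingMeasure hP hQ hT, ?_⟩
    simp only [integral_abs_stepFun_sub_stepFun hP hQ, couplingMeasure_real_prod hP hQ hT]

end StepFunction

theorem delta1_stepFun_eq_matrix_min_general (nI nJ : ℕ)
    (P : Fin nI → Set I) (Q : Fin nJ → Set I)
    (hPmeas : ∀ i, MeasurableSet (P i))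
    (hPdisj : Pairwise (Function.onFun Disjoint P))
    (hPcover : (⋃ i, P i) = Set.univ)
    (hQmeas : ∀ j, MeasurableSet (Q j))
    (hQdisj : Pairwise (Function.onFun Disjoint Q))
    (hQcover : (⋃ j, Q j) = Set.univ)
    (w₁ : Fin nI → Fin nI → ℝ) (w₂ : Fin nJ → Fin nJ → ℝ) :
    ∃ T : Fin nI → Fin nJ → ℝ,
      ((∀ i j, 0 ≤ T i j) ∧
       (∀ i, ∑ j, T i j = (volume (P i)).toReal) ∧
       (∀ j, ∑ i, T i j = (volume (Q j)).toReal)) ∧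
      (∑ i, ∑ j, ∑ i', ∑ j', |w₁ i j - w₂ i' j'| * (T i i' * T j j')) =
        sInf { r : ℝ | ∃ π : Measure (I × I), IsProbabilityMeasure π ∧
          π.map Prod.fst = volume ∧ π.map Prod.snd = volume ∧
          r = ∫ q : (I × I) × (I × I),
            |stepFun P w₁ q.1.1 q.2.1 - stepFun Q w₂ q.1.2 q.2.2| ∂(π.prod π) } ∧
      ∀ T' : Fin nI → Fin nJ → ℝ,
        ((∀ i j, 0 ≤ T' i j) ∧
         (∀ i, ∑ j, T' i j = (volume (P i)).toReal) ∧
         (∀ j, ∑ i, T' i j = (volume (Q j)).toReal)) →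
        (∑ i, ∑ j, ∑ i', ∑ j', |w₁ i j - w₂ i' j'| * (T i i' * T j j')) ≤
          ∑ i, ∑ j, ∑ i', ∑ j', |w₁ i j - w₂ i' j'| * (T' i i' * T' j j') := by
  have hP : IsMeasurablePartition P := ⟨hPmeas, hPdisj, hPcover⟩
  have hQ : IsMeasurablePartition Q := ⟨hQmeas, hQdisj, hQcover⟩
  have hne : (couplingMatrices (fun i => volume.real (P i)) fun j => volume.real (Q j)).Nonempty :=
    ⟨_, mul_mem_couplingMatrices (fun _ => measureReal_nonneg) (fun _ => measureReal_nonneg)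
      (by simpa using hP.sum_measureReal_inter volume .univ)
      (by simpa using hQ.sum_measureReal_inter volume .univ)⟩
  obtain ⟨T, hT, hmin⟩ := (isCompact_couplingMatrices _ _).exists_isMinOn hne
    (continuous_gromovWassersteinCost w₁ w₂).continuousOn
  refine ⟨T, hT, ?_, fun T' hT' => hmin hT'⟩
  rw [setOf_integral_coupling_eq_image_gromovWassersteinCost hP hQ w₁ w₂]
  exact (IsLeast.csInf_eq ⟨Set.mem_image_of_mem _ hT,
    Set.forall_mem_image.2 fun _ h => isMinOn_iff.mp hmin _ h⟩).symm

/-- for step functions, the infimum over measure couplings of the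
δ₁-type double integral is attained by a coupling matrix and equals the matrix
minimum. -/
theorem delta1_stepFun_eq_matrix_min (nI nJ : ℕ)
    (P : Fin nI → Set I) (Q : Fin nJ → Set I)
    (hPmeas : ∀ i, MeasurableSet (P i))
    (hPdisj : Pairwise (Function.onFun Disjoint P))
    (hPcover : (⋃ i, P i) = Set.univ)
    (hQmeas : ∀ j, MeasurableSet (Q j))
    (hQdisj : Pairwise (Function.onFun Disjoint Q))
    (hQcover : (⋃ j, Q j) = Set.univ)
    (w₁ : Fin nI → Fin nI → ℝ) (w₂ : Fin nJ → Fin nJ → ℝ)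
    (hw₁ : ∀ i j, w₁ i j ∈ Set.Icc (0 : ℝ) 1) (hw₁s : ∀ i j, w₁ i j = w₁ j i)
    (hw₂ : ∀ i j, w₂ i j ∈ Set.Icc (0 : ℝ) 1) (hw₂s : ∀ i j, w₂ i j = w₂ j i) :
    ∃ T : Fin nI → Fin nJ → ℝ,
      ((∀ i j, 0 ≤ T i j) ∧
       (∀ i, ∑ j, T i j = (volume (P i)).toReal) ∧
       (∀ j, ∑ i, T i j = (volume (Q j)).toReal)) ∧
      (∑ i, ∑ j, ∑ i', ∑ j', |w₁ i j - w₂ i' j'| * (T i i' * T j j')) =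
        sInf { r : ℝ | ∃ π : Measure (I × I), IsProbabilityMeasure π ∧
          π.map Prod.fst = volume ∧ π.map Prod.snd = volume ∧
          r = ∫ q : (I × I) × (I × I),
            |stepFun P w₁ q.1.1 q.2.1 - stepFun Q w₂ q.1.2 q.2.2| ∂(π.prod π) } ∧
      ∀ T' : Fin nI → Fin nJ → ℝ,
        ((∀ i j, 0 ≤ T' i j) ∧
         (∀ i, ∑ j, T' i j = (volume (P i)).toReal) ∧
         (∀ j, ∑ i, T' i j = (volume (Q j)).toReal)) →
        (∑ i, ∑ j, ∑ i', ∑ j', |w₁ i j - w₂ i' j'| * (T i i' * T j j')) ≤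
          ∑ i, ∑ j, ∑ i', ∑ j', |w₁ i j - w₂ i' j'| * (T' i i' * T' j j') :=
  delta1_stepFun_eq_matrix_min_general nI nJ P Q hPmeas hPdisj hPcover hQmeas hQdisj hQcover w₁ w₂
end
end

section
/- Let W₁ ∈ ℝ^{I×I} and W₂ ∈ ℝ^{J×J} be symmetric matrices, let μ ∈ ℝ^I and ν ∈ ℝ^J be nonnegative vectors each summing to 1, and let T ∈ Π(μ, ν). Then Σ_{i,j,i',j'} (W₁[i,j] − W₂[i',j'])² T_{ii'} T_{jj'} = ⟨D − 2 W₁ T W₂ᵀ, T⟩, where D = (W₁ ⊙ W₁) μ 1_Jᵀ + 1_I νᵀ (W₂ ⊙ W₂), ⊙ denotes the entrywise (Hadamard) product, and ⟨·,·⟩ denotes the Frobenius inner product of matrices. -/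
/-! Expanding the square splits the objective into three sums against `T ⊗ T`. The two squared
terms depend only on the marginals `μ ⊗ μ` and `ν ⊗ ν` of `T ⊗ T`, which turns them into the
quadratic forms `μ ⬝ᵥ (W₁ ⊙ W₁) μ` and `ν ⬝ᵥ (W₂ ⊙ W₂) ν`, and the cross term is the Frobenius
product `⟨W₁ T W₂ᵀ, T⟩`. -/

open Matrix

noncomputable section

/-- A coupling matrix between probability vectors `μ` and `ν`: a nonnegative
matrix with row sums `μ` and column sums `ν`. -/
def IsCouplingMat {a b : ℕ} (μ : Fin a → ℝ) (ν : Fin b → ℝ)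
    (T : Matrix (Fin a) (Fin b) ℝ) : Prop :=
  (∀ i j, 0 ≤ T i j) ∧ (∀ i, ∑ j, T i j = μ i) ∧ (∀ j, ∑ i, T i j = ν j)

open Finset

theorem sum_sum_sum_sum_comm {α β γ δ R : Type*} [Fintype α] [Fintype β] [Fintype γ]
    [Fintype δ] [AddCommMonoid R] (f : α → β → γ → δ → R) :
    ∑ a, ∑ b, ∑ c, ∑ d, f a b c d = ∑ c, ∑ d, ∑ a, ∑ b, f a b c d := by
  simpa only [Fintype.sum_prod_type] using
    sum_comm (s := univ) (t := univ) (f := fun (p : α × β) (q : γ × δ) => f p.1 p.2 q.1 q.2)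

section

variable {m n R : Type*} [Fintype m] [Fintype n] [CommSemiring R] {T : Matrix m n R}
  {μ : m → R} {ν : n → R}

theorem sum_mul_mul_of_rowSums (hrow : ∀ i, ∑ j, T i j = μ i) (A : Matrix m m R) :
    ∑ i, ∑ j, ∑ i', ∑ j', A i j * (T i i' * T j j') = μ ⬝ᵥ (A *ᵥ μ) := by
  simp only [← mul_sum, ← sum_mul, hrow]
  simp only [dotProduct, mulVec, mul_sum]
  exact sum_congr rfl fun i _ => sum_congr rfl fun j _ => by ring

theorem sum_mul_mul_of_colSums (hcol : ∀ j, ∑ i, T i j = ν j) (B : Matrix n n R) :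
    ∑ i, ∑ j, ∑ i', ∑ j', B i' j' * (T i i' * T j j') = ν ⬝ᵥ (B *ᵥ ν) := by
  rw [sum_sum_sum_sum_comm]
  simp only [← mul_sum, ← sum_mul, hcol]
  simp only [dotProduct, mulVec, mul_sum]
  exact sum_congr rfl fun i _ => sum_congr rfl fun j _ => by ring

theorem sum_mul_mul_mul_eq_sum_mul_mul_transpose (A : Matrix m m R) (B : Matrix n n R) :
    ∑ i, ∑ j, ∑ i', ∑ j', A i j * B i' j' * (T i i' * T j j') =
      ∑ i, ∑ i', (A * T * Bᵀ) i i' * T i i' := by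
  simp only [mul_apply, transpose_apply, sum_mul]
  refine sum_congr rfl fun i _ => ?_
  rw [sum_comm]
  refine sum_congr rfl fun i' _ => ?_
  rw [sum_comm]
  exact sum_congr rfl fun j' _ => sum_congr rfl fun j _ => by ring

theorem sum_sum_mul_of_rowSums (hrow : ∀ i, ∑ j, T i j = μ i) (a : m → R) :
    ∑ i, ∑ j, a i * T i j = a ⬝ᵥ μ := by
  simp only [← mul_sum, hrow, dotProduct]

theorem sum_sum_mul_of_colSums (hcol : ∀ j, ∑ i, T i j = ν j) (b : n → R) :
    ∑ i, ∑ j, b j * T i j = b ⬝ᵥ ν := by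
  rw [sum_comm]
  simp only [← mul_sum, hcol, dotProduct]

end

theorem gw2_objective_eq_general (nI nJ : ℕ)
    (W₁ : Matrix (Fin nI) (Fin nI) ℝ) (W₂ : Matrix (Fin nJ) (Fin nJ) ℝ)
    (μ : Fin nI → ℝ) (ν : Fin nJ → ℝ)
    (T : Matrix (Fin nI) (Fin nJ) ℝ) (hT : IsCouplingMat μ ν T) :
    (∑ i, ∑ j, ∑ i', ∑ j', (W₁ i j - W₂ i' j') ^ 2 * (T i i' * T j j')) =
      ∑ i, ∑ j,
        ((((W₁ ⊙ W₁) *ᵥ μ) i + (ν ᵥ* (W₂ ⊙ W₂)) j - 2 * (W₁ * T * W₂ᵀ) i j)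
          * T i j) := by
  obtain ⟨-, hrow, hcol⟩ := hT
  calc _ = ∑ i, ∑ j, ∑ i', ∑ j', (W₁ ⊙ W₁) i j * (T i i' * T j j')
        + ∑ i, ∑ j, ∑ i', ∑ j', (W₂ ⊙ W₂) i' j' * (T i i' * T j j')
        - 2 * ∑ i, ∑ j, ∑ i', ∑ j', W₁ i j * W₂ i' j' * (T i i' * T j j') := by
        simp only [mul_sum, ← sum_add_distrib, ← sum_sub_distrib, hadamard_apply]
        exact sum_congr rfl fun i _ => sum_congr rfl fun j _ =>
          sum_congr rfl fun i' _ => sum_congr rfl fun j' _ => by ring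
    _ = ((W₁ ⊙ W₁) *ᵥ μ) ⬝ᵥ μ + (ν ᵥ* (W₂ ⊙ W₂)) ⬝ᵥ ν
        - 2 * ∑ i, ∑ j, (W₁ * T * W₂ᵀ) i j * T i j := by
        rw [sum_mul_mul_of_rowSums hrow, sum_mul_mul_of_colSums hcol,
          sum_mul_mul_mul_eq_sum_mul_mul_transpose, dotProduct_comm, dotProduct_mulVec]
    _ = _ := by
        rw [← sum_sum_mul_of_rowSums hrow, ← sum_sum_mul_of_colSums hcol]
        simp only [mul_sum, ← sum_add_distrib, ← sum_sub_distrib]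
        exact sum_congr rfl fun i _ => sum_congr rfl fun j _ => by ring

/-- closed form of the squared 2-order Gromov-Wasserstein
objective: `Σ (W₁[i,j] - W₂[i',j'])² T_{ii'} T_{jj'} = ⟨D - 2 W₁ T W₂ᵀ, T⟩`
with `D = (W₁ ⊙ W₁) μ 1ᵀ + 1 νᵀ (W₂ ⊙ W₂)`. -/
theorem gw2_objective_eq (nI nJ : ℕ)
    (W₁ : Matrix (Fin nI) (Fin nI) ℝ) (W₂ : Matrix (Fin nJ) (Fin nJ) ℝ)
    (h₁ : W₁ᵀ = W₁) (h₂ : W₂ᵀ = W₂)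
    (μ : Fin nI → ℝ) (ν : Fin nJ → ℝ)
    (hμ0 : ∀ i, 0 ≤ μ i) (hμ1 : ∑ i, μ i = 1)
    (hν0 : ∀ j, 0 ≤ ν j) (hν1 : ∑ j, ν j = 1)
    (T : Matrix (Fin nI) (Fin nJ) ℝ) (hT : IsCouplingMat μ ν T) :
    (∑ i, ∑ j, ∑ i', ∑ j', (W₁ i j - W₂ i' j') ^ 2 * (T i i' * T j j')) =
      ∑ i, ∑ j,
        ((((W₁ ⊙ W₁) *ᵥ μ) i + (ν ᵥ* (W₂ ⊙ W₂)) j - 2 * (W₁ * T * W₂ᵀ) i j)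
          * T i j) :=
  gw2_objective_eq_general nI nJ W₁ W₂ μ ν T hT

end
end

section
/- Let A₁, …, A_M with A_m ∈ ℝ^{N_m × N_m} be symmetric matrices, let μ_m ∈ ℝ^{N_m} and μ ∈ ℝ^K be nonnegative vectors each summing to 1 with all entries of μ strictly positive, and let T_m ∈ Π(μ_m, μ) for each m. Then the function F(W) = (1/M) Σ_{m=1}^M Σ_{i,j,k,k'} (A_m[i,j] − W[k,k'])² (T_m)_{ik} (T_m)_{jk'} over W ∈ ℝ^{K×K} has the unique minimizer W* given entrywise by W*[k,k'] = (Σ_{m=1}^M (T_mᵀ A_m T_m)[k,k']) / (M · μ_k · μ_{k'}). -/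
/-! The objective separates over the entries of `W`: for each `(k, k')` it is a weighted sum of
squares `Σ_x (a_x - c)² w_x` over the samples `x = (m, i, j)`, with total weight
`Σ_x w_x = M μ_k μ_{k'} > 0` by the column-sum condition on the couplings. Completing the square,
`Σ_x (a_x - c)² w_x = Σ_x (a_x - d)² w_x + (c - d)² Σ_x w_x` for the weighted mean `d`, which is
`W*[k,k']`. -/

open Matrix

noncomputable section

theorem sum_sub_sq_mul_eq_add {ι : Type*} [Fintype ι] {a w : ι → ℝ} {d : ℝ}
    (hd : d * ∑ x, w x = ∑ x, a x * w x) (c : ℝ) :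
    ∑ x, (a x - c) ^ 2 * w x = ∑ x, (a x - d) ^ 2 * w x + (c - d) ^ 2 * ∑ x, w x := by
  have expand : ∀ x, (a x - c) ^ 2 * w x = (a x - d) ^ 2 * w x + (c - d) ^ 2 * w x
      + 2 * (d - c) * (a x * w x - d * w x) := fun x => by ring
  rw [Finset.sum_congr rfl fun x _ => expand x, Finset.sum_add_distrib, Finset.sum_add_distrib,
    ← Finset.mul_sum, ← Finset.mul_sum, Finset.sum_sub_distrib, ← Finset.mul_sum, hd, sub_self,
    mul_zero, add_zero]

section WeightedLeastSquares

variable {κ ι : Type*} [Fintype κ] [Fintype ι] (a : ι → ℝ) (w : κ → ι → ℝ)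

def weightedSqError (c : κ → ℝ) : ℝ :=
  ∑ p, ∑ x, (a x - c p) ^ 2 * w p x

variable {a w} {d : κ → ℝ}

theorem weightedSqError_eq_add (hd : ∀ p, d p * ∑ x, w p x = ∑ x, a x * w p x) (c : κ → ℝ) :
    weightedSqError a w c = weightedSqError a w d + ∑ p, (c p - d p) ^ 2 * ∑ x, w p x := by
  rw [weightedSqError, weightedSqError, ← Finset.sum_add_distrib]
  exact Finset.sum_congr rfl fun p _ => sum_sub_sq_mul_eq_add (hd p) (c p)

theorem weightedSqError_le (hw : ∀ p, 0 ≤ ∑ x, w p x)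
    (hd : ∀ p, d p * ∑ x, w p x = ∑ x, a x * w p x) (c : κ → ℝ) :
    weightedSqError a w d ≤ weightedSqError a w c := by
  rw [weightedSqError_eq_add hd c, le_add_iff_nonneg_right]
  exact Finset.sum_nonneg fun p _ => mul_nonneg (sq_nonneg _) (hw p)

theorem eq_of_weightedSqError_eq (hw : ∀ p, 0 < ∑ x, w p x)
    (hd : ∀ p, d p * ∑ x, w p x = ∑ x, a x * w p x) {c : κ → ℝ}
    (h : weightedSqError a w c = weightedSqError a w d) : c = d := by
  rw [weightedSqError_eq_add hd c, add_eq_left,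
    Finset.sum_eq_zero_iff_of_nonneg fun p _ => mul_nonneg (sq_nonneg _) (hw p).le] at h
  funext p
  have := h p (Finset.mem_univ p)
  rw [mul_eq_zero, or_iff_left (hw p).ne', sq_eq_zero_iff, sub_eq_zero] at this
  exact this

end WeightedLeastSquares

theorem Matrix.transpose_mul_mul_apply {n k R : Type*} [Fintype n] [CommSemiring R]
    (A : Matrix n n R) (T : Matrix n k R) (a b : k) :
    (Tᵀ * A * T) a b = ∑ i, ∑ j, A i j * (T i a * T j b) := by
  simp only [mul_apply, transpose_apply, Finset.sum_mul]
  rw [Finset.sum_comm]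
  exact Finset.sum_congr rfl fun i _ => Finset.sum_congr rfl fun j _ => by ring

theorem IsCouplingMat.sum_sum_mul {a b : ℕ} {μ : Fin a → ℝ} {ν : Fin b → ℝ}
    {T : Matrix (Fin a) (Fin b) ℝ} (hT : IsCouplingMat μ ν T) (k k' : Fin b) :
    ∑ i, ∑ j, T i k * T j k' = ν k * ν k' := by
  rw [← Finset.sum_mul_sum, hT.2.2, hT.2.2]

theorem gw_barycenter_closed_form_general (M K : ℕ) (hM : 0 < M) (N : Fin M → ℕ)
    (A : (m : Fin M) → Matrix (Fin (N m)) (Fin (N m)) ℝ)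
    (μm : (m : Fin M) → Fin (N m) → ℝ) (μ : Fin K → ℝ)
    (hμ0 : ∀ k, 0 < μ k)
    (T : (m : Fin M) → Matrix (Fin (N m)) (Fin K) ℝ)
    (hT : ∀ m, IsCouplingMat (μm m) μ (T m)) :
    let F : Matrix (Fin K) (Fin K) ℝ → ℝ := fun W =>
      (1 / (M : ℝ)) * ∑ m, ∑ i, ∑ j, ∑ k, ∑ k',
        (A m i j - W k k') ^ 2 * ((T m) i k * (T m) j k')
    let Wstar : Matrix (Fin K) (Fin K) ℝ := Matrix.of fun k k' =>
      (∑ m, ((T m)ᵀ * A m * T m) k k') / ((M : ℝ) * μ k * μ k')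
    (∀ W, F Wstar ≤ F W) ∧ ∀ W, F W = F Wstar → W = Wstar := by
  intro F Wstar
  let a : (Σ m, Fin (N m) × Fin (N m)) → ℝ := fun x => A x.1 x.2.1 x.2.2
  let w : Fin K × Fin K → (Σ m, Fin (N m) × Fin (N m)) → ℝ := fun p x =>
    T x.1 x.2.1 p.1 * T x.1 x.2.2 p.2
  have hF : ∀ W, F W = 1 / (M : ℝ) * weightedSqError a w (Function.uncurry W) := fun W => by
    simp only [F, weightedSqError, Finset.sum_comm (γ := Fin K × Fin K), Fintype.sum_sigma,
      Fintype.sum_prod_type]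
    rfl
  have hw : ∀ p, ∑ x, w p x = M * μ p.1 * μ p.2 := fun p => by
    simp only [w, Fintype.sum_sigma, Fintype.sum_prod_type, (hT _).sum_sum_mul, Finset.sum_const,
      Finset.card_univ, Fintype.card_fin, nsmul_eq_mul, mul_assoc]
  have hw_pos : ∀ p, 0 < ∑ x, w p x := fun p => by
    have := hμ0 p.1; have := hμ0 p.2; rw [hw]; positivity
  have hd : ∀ p, Function.uncurry Wstar p * ∑ x, w p x = ∑ x, a x * w p x := fun p => by
    rw [show Function.uncurry Wstar p = _ / _ from rfl, hw, div_mul_cancel₀ _ (hw p ▸ hw_pos p).ne']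
    simp only [a, w, transpose_mul_mul_apply, Fintype.sum_sigma, Fintype.sum_prod_type]
  have hM' : (0 : ℝ) < 1 / M := by positivity
  refine ⟨fun W => ?_, fun W hW => ?_⟩
  · rw [hF, hF]
    exact mul_le_mul_of_nonneg_left (weightedSqError_le (fun p => (hw_pos p).le) hd _) hM'.le
  · rw [hF, hF, mul_right_inj' hM'.ne'] at hW
    exact Function.uncurry_injective (eq_of_weightedSqError_eq hw_pos hd hW)

/-- the Gromov-Wasserstein barycenter objective has the unique
minimizer `W*[k,k'] = (Σ_m (T_mᵀ A_m T_m)[k,k']) / (M μ_k μ_{k'})`. -/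
theorem gw_barycenter_closed_form (M K : ℕ) (hM : 0 < M) (N : Fin M → ℕ)
    (A : (m : Fin M) → Matrix (Fin (N m)) (Fin (N m)) ℝ)
    (hA : ∀ m, (A m)ᵀ = A m)
    (μm : (m : Fin M) → Fin (N m) → ℝ) (μ : Fin K → ℝ)
    (hμm0 : ∀ m i, 0 ≤ μm m i) (hμm1 : ∀ m, ∑ i, μm m i = 1)
    (hμ0 : ∀ k, 0 < μ k) (hμ1 : ∑ k, μ k = 1)
    (T : (m : Fin M) → Matrix (Fin (N m)) (Fin K) ℝ)
    (hT : ∀ m, IsCouplingMat (μm m) μ (T m)) :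
    let F : Matrix (Fin K) (Fin K) ℝ → ℝ := fun W =>
      (1 / (M : ℝ)) * ∑ m, ∑ i, ∑ j, ∑ k, ∑ k',
        (A m i j - W k k') ^ 2 * ((T m) i k * (T m) j k')
    let Wstar : Matrix (Fin K) (Fin K) ℝ := Matrix.of fun k k' =>
      (∑ m, ((T m)ᵀ * A m * T m) k k') / ((M : ℝ) * μ k * μ k')
    (∀ W, F Wstar ≤ F W) ∧ ∀ W, F W = F Wstar → W = Wstar :=
  gw_barycenter_closed_form_general M K hM N A μm μ hμ0 T hT

end
end

section
/- Let A₁, …, A_M with A_m ∈ ℝ^{N_m × N_m} be symmetric matrices, let μ_m ∈ ℝ^{N_m} and μ ∈ ℝ^K be nonnegative vectors each summing to 1, let T_m ∈ Π(μ_m, μ) for each m, let L ∈ ℝ^{K×K}, and let α ≥ 0. Define the smoothed objective F(W) = (1/M) Σ_{m=1}^M Σ_{i,j,k,k'} (A_m[i,j] − W[k,k'])² (T_m)_{ik} (T_m)_{jk'} + α ‖L W Lᵀ‖_F² over W ∈ ℝ^{K×K}. Then the gradient of F vanishes at W if and only if W satisfies the linear equation α Lᵀ L W Lᵀ L + diag(μ)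 W diag(μ) = (1/M) Σ_{m=1}^M T_mᵀ A_m T_m. -/
open Matrix

noncomputable section

attribute [local instance] Matrix.normedAddCommGroup Matrix.normedSpace

/-!
With the Frobenius pairing `⟪P, Q⟫ = ∑ i j, P i j * Q i j`, the column marginals of each
coupling turn the objective into a quadratic function `c - 2 ⟪Y, W⟫ + ⟪S W, W⟫`, where
`Y = (1/M) ∑ Tₘᵀ Aₘ Tₘ` and `S W = α LᵀL W LᵀL + diag(μ) W diag(μ)` is self-adjoint for the
pairing. Its derivative is therefore `2 ⟪S W - Y, ·⟫`, which vanishes exactly when `S W = Y`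
because the pairing is nondegenerate.
-/

section QuadraticForm

variable {𝕜 E : Type*} [RCLike 𝕜] [NormedAddCommGroup E] [NormedSpace 𝕜 E]
  {B : E →L[𝕜] E →L[𝕜] 𝕜} {S : E →L[𝕜] E}

theorem ContinuousLinearMap.hasFDerivAt_apply_comp_self (hS : ∀ x y, B (S x) y = B (S y) x)
    (x : E) : HasFDerivAt (fun x => B (S x) x) ((2 : 𝕜) • B (S x)) x := by
  refine (B.hasFDerivAt_of_bilinear S.hasFDerivAt (hasFDerivAt_id x)).congr_fderiv ?_
  ext h
  simp [hS h x, two_mul]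

theorem fderiv_eq_zero_iff_of_eq_quadratic (hB : Function.Injective B)
    (hS : ∀ x y, B (S x) y = B (S y) x) {f : E → 𝕜} {c : 𝕜} {y : E}
    (hf : ∀ x, f x = c - 2 * B y x + B (S x) x) (x : E) :
    fderiv 𝕜 f x = 0 ↔ S x = y := by
  have hf' : HasFDerivAt f (B ((2 : 𝕜) • (S x - y))) x := by
    rw [show f = _ from funext hf]
    refine (((B y).hasFDerivAt.const_mul 2).const_sub c |>.add
      (B.hasFDerivAt_apply_comp_self hS x)).congr_fderiv ?_
    ext h
    simp only [_root_.add_apply, _root_.neg_apply, _root_.smul_apply, smul_eq_mul, map_smul,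
      map_sub, _root_.sub_apply]
    ring
  rw [hf'.fderiv, map_eq_zero_iff B hB, smul_eq_zero, sub_eq_zero]
  simp

end QuadraticForm

namespace Matrix

variable {ι κ l m n o : Type*} [Fintype ι] [Fintype κ] [Fintype l] [Fintype m] [Fintype n]
  [Fintype o]

def frobeniusInner : Matrix m n ℝ →L[ℝ] Matrix m n ℝ →L[ℝ] ℝ :=
  (LinearMap.mk₂ ℝ (fun P Q => ∑ i, ∑ j, P i j * Q i j)
    (fun _ _ _ => by simp only [add_apply, add_mul, Finset.sum_add_distrib])
    (fun _ _ _ => by simp only [smul_apply, smul_eq_mul, mul_assoc, Finset.mul_sum])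
    (fun _ _ _ => by simp only [add_apply, mul_add, Finset.sum_add_distrib])
    (fun _ _ _ => by simp only [smul_apply, smul_eq_mul, mul_left_comm, Finset.mul_sum])
    ).toContinuousBilinearMap

@[simp]
theorem frobeniusInner_apply (P Q : Matrix m n ℝ) :
    frobeniusInner P Q = ∑ i, ∑ j, P i j * Q i j := rfl

theorem frobeniusInner_comm (P Q : Matrix m n ℝ) : frobeniusInner P Q = frobeniusInner Q P := by
  simp only [frobeniusInner_apply, mul_comm]

theorem frobeniusInner_eq_trace (P Q : Matrix m n ℝ) : frobeniusInner P Q = trace (Pᵀ * Q) := by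
  simp [trace, mul_apply, Finset.sum_comm (γ := m)]

theorem frobeniusInner_injective [DecidableEq m] [DecidableEq n] :
    Function.Injective (frobeniusInner : Matrix m n ℝ → _) := by
  refine (injective_iff_map_eq_zero _).2 fun P hP => ?_
  ext i j
  simpa [single_apply, ite_and] using congr($hP (single i j 1))

theorem frobeniusInner_mul_mul_left (A : Matrix l m ℝ) (P : Matrix m n ℝ) (B : Matrix n o ℝ)
    (Q : Matrix l o ℝ) : frobeniusInner (A * P * B) Q = frobeniusInner P (Aᵀ * Q * Bᵀ) := by
  simp only [frobeniusInner_eq_trace, transpose_mul, Matrix.mul_assoc]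
  rw [trace_mul_comm]
  simp only [Matrix.mul_assoc]

theorem frobeniusInner_mul_mul_comm_of_isSymm {A : Matrix m m ℝ} {B : Matrix n n ℝ}
    (hA : A.IsSymm) (hB : B.IsSymm) (P Q : Matrix m n ℝ) :
    frobeniusInner (A * P * B) Q = frobeniusInner (A * Q * B) P := by
  rw [frobeniusInner_mul_mul_left, hA.eq, hB.eq, frobeniusInner_comm]

theorem sum_sq_mul_mul_transpose (L : Matrix l m ℝ) (W : Matrix m m ℝ) :
    ∑ i, ∑ j, (L * W * Lᵀ) i j ^ 2 = frobeniusInner (Lᵀ * L * W * (Lᵀ * L)) W := by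
  simp only [sq]
  rw [← frobeniusInner_apply, frobeniusInner_mul_mul_left, transpose_transpose,
    frobeniusInner_comm]
  simp only [Matrix.mul_assoc]

theorem sum_sq_sub_mul_coupling [DecidableEq κ] (A : Matrix ι ι ℝ) (T : Matrix ι κ ℝ)
    (ν : κ → ℝ) (hT : ∀ k, ∑ i, T i k = ν k) (W : Matrix κ κ ℝ) :
    ∑ i, ∑ j, ∑ k, ∑ k', (A i j - W k k') ^ 2 * (T i k * T j k') =
      ∑ i, ∑ j, ∑ k, ∑ k', A i j ^ 2 * (T i k * T j k')
        - 2 * frobeniusInner (Tᵀ * A * T) W + frobeniusInner (diagonal ν * W * diagonal ν) W := by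
  have hcross : ∑ i, ∑ j, ∑ k, ∑ k', A i j * W k k' * (T i k * T j k') =
      frobeniusInner (Tᵀ * A * T) W := by
    simp only [frobeniusInner_apply, mul_apply, transpose_apply, Finset.sum_mul]
    simp_rw [Finset.sum_comm (s := (Finset.univ : Finset ι)) (t := (Finset.univ : Finset κ))]
    refine Finset.sum_congr rfl fun k _ => Finset.sum_congr rfl fun k' _ => ?_
    rw [Finset.sum_comm]
    exact Finset.sum_congr rfl fun _ _ => Finset.sum_congr rfl fun _ _ => by ring
  have hsq : ∑ i, ∑ j, ∑ k, ∑ k', W k k' ^ 2 * (T i k * T j k') =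
      frobeniusInner (diagonal ν * W * diagonal ν) W := by
    simp only [frobeniusInner_apply, mul_diagonal, diagonal_mul, ← hT, Finset.sum_mul,
      Finset.mul_sum]
    simp_rw [Finset.sum_comm (s := (Finset.univ : Finset ι)) (t := (Finset.univ : Finset κ))]
    refine Finset.sum_congr rfl fun k _ => Finset.sum_congr rfl fun k' _ => ?_
    rw [Finset.sum_comm]
    exact Finset.sum_congr rfl fun _ _ => Finset.sum_congr rfl fun _ _ => by ring
  rw [← hcross, ← hsq]
  simp only [sub_sq, add_mul, sub_mul, Finset.sum_add_distrib, Finset.sum_sub_distrib,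
    Finset.mul_sum, mul_assoc]

variable [DecidableEq m]

def smoothedGWOperator (L : Matrix m m ℝ) (α : ℝ) (μ : m → ℝ) :
    Matrix m m ℝ →L[ℝ] Matrix m m ℝ :=
  α • (LinearMap.mulLeftRight ℝ (Lᵀ * L, Lᵀ * L)).toContinuousLinearMap
    + (LinearMap.mulLeftRight ℝ (diagonal μ, diagonal μ)).toContinuousLinearMap

theorem smoothedGWOperator_apply (L : Matrix m m ℝ) (α : ℝ) (μ : m → ℝ) (W : Matrix m m ℝ) :
    smoothedGWOperator L α μ W = α • (Lᵀ * L * W * (Lᵀ * L)) + diagonal μ * W * diagonal μ :=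
  rfl

theorem frobeniusInner_smoothedGWOperator_comm (L : Matrix m m ℝ) (α : ℝ) (μ : m → ℝ)
    (P Q : Matrix m m ℝ) :
    frobeniusInner (smoothedGWOperator L α μ P) Q =
      frobeniusInner (smoothedGWOperator L α μ Q) P := by
  simp only [smoothedGWOperator_apply, map_add, map_smul, _root_.add_apply, _root_.smul_apply,
    frobeniusInner_mul_mul_comm_of_isSymm (isSymm_transpose_mul_self L)
      (isSymm_transpose_mul_self L) P,
    frobeniusInner_mul_mul_comm_of_isSymm (isSymm_diagonal μ) (isSymm_diagonal μ) P]

end Matrix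

theorem smoothedGW_objective_eq {M K : ℕ} (hM : M ≠ 0) {N : Fin M → ℕ}
    (A : (m : Fin M) → Matrix (Fin (N m)) (Fin (N m)) ℝ) (μ : Fin K → ℝ)
    (T : (m : Fin M) → Matrix (Fin (N m)) (Fin K) ℝ) (hT : ∀ m k, ∑ i, T m i k = μ k)
    (L : Matrix (Fin K) (Fin K) ℝ) (α : ℝ) (W : Matrix (Fin K) (Fin K) ℝ) :
    (1 / (M : ℝ)) * ∑ m, ∑ i, ∑ j, ∑ k, ∑ k', (A m i j - W k k') ^ 2 * (T m i k * T m j k')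
        + α * ∑ k, ∑ k', (L * W * Lᵀ) k k' ^ 2 =
      (1 / (M : ℝ)) * ∑ m, ∑ i, ∑ j, ∑ k, ∑ k', A m i j ^ 2 * (T m i k * T m j k')
        - 2 * frobeniusInner ((1 / (M : ℝ)) • ∑ m, (T m)ᵀ * A m * T m) W
        + frobeniusInner (smoothedGWOperator L α μ W) W := by
  have hM' : (M : ℝ) ≠ 0 := Nat.cast_ne_zero.mpr hM
  simp only [smoothedGWOperator_apply, sum_sq_sub_mul_coupling _ _ μ (hT _),
    sum_sq_mul_mul_transpose, map_add, map_smul, map_sum, _root_.add_apply, _root_.smul_apply,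
    _root_.sum_apply, Finset.sum_add_distrib, Finset.sum_sub_distrib, Finset.sum_const,
    Finset.card_univ, Fintype.card_fin, smul_eq_mul, nsmul_eq_mul, ← Finset.mul_sum]
  field_simp
  ring

theorem smoothed_gw_barycenter_foc_general (M K : ℕ) (hM : 0 < M) (N : Fin M → ℕ)
    (A : (m : Fin M) → Matrix (Fin (N m)) (Fin (N m)) ℝ)
    (μm : (m : Fin M) → Fin (N m) → ℝ) (μ : Fin K → ℝ)
    (T : (m : Fin M) → Matrix (Fin (N m)) (Fin K) ℝ)
    (hT : ∀ m, IsCouplingMat (μm m) μ (T m))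
    (L : Matrix (Fin K) (Fin K) ℝ) (α : ℝ)
    (W : Matrix (Fin K) (Fin K) ℝ) :
    let F : Matrix (Fin K) (Fin K) ℝ → ℝ := fun W' =>
      (1 / (M : ℝ)) * ∑ m, ∑ i, ∑ j, ∑ k, ∑ k',
        (A m i j - W' k k') ^ 2 * ((T m) i k * (T m) j k')
      + α * ∑ k, ∑ k', ((L * W' * Lᵀ) k k') ^ 2
    (fderiv ℝ F W = 0 ↔
      α • (Lᵀ * L * W * (Lᵀ * L)) +
          Matrix.diagonal μ * W * Matrix.diagonal μ =
        (1 / (M : ℝ)) • ∑ m, (T m)ᵀ * A m * T m) := by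
  intro F
  rw [← smoothedGWOperator_apply]
  exact fderiv_eq_zero_iff_of_eq_quadratic frobeniusInner_injective
    (frobeniusInner_smoothedGWOperator_comm L α μ)
    (smoothedGW_objective_eq hM.ne' A μ T (fun m => (hT m).2.2) L α) W

/-- first-order optimality condition for the smoothed
Gromov-Wasserstein barycenter objective. -/
theorem smoothed_gw_barycenter_foc (M K : ℕ) (hM : 0 < M) (N : Fin M → ℕ)
    (A : (m : Fin M) → Matrix (Fin (N m)) (Fin (N m)) ℝ)
    (hA : ∀ m, (A m)ᵀ = A m)
    (μm : (m : Fin M) → Fin (N m) → ℝ) (μ : Fin K → ℝ)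
    (hμm0 : ∀ m i, 0 ≤ μm m i) (hμm1 : ∀ m, ∑ i, μm m i = 1)
    (hμ0 : ∀ k, 0 ≤ μ k) (hμ1 : ∑ k, μ k = 1)
    (T : (m : Fin M) → Matrix (Fin (N m)) (Fin K) ℝ)
    (hT : ∀ m, IsCouplingMat (μm m) μ (T m))
    (L : Matrix (Fin K) (Fin K) ℝ) (α : ℝ) (hα : 0 ≤ α)
    (W : Matrix (Fin K) (Fin K) ℝ) :
    let F : Matrix (Fin K) (Fin K) ℝ → ℝ := fun W' =>
      (1 / (M : ℝ)) * ∑ m, ∑ i, ∑ j, ∑ k, ∑ k',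
        (A m i j - W' k k') ^ 2 * ((T m) i k * (T m) j k')
      + α * ∑ k, ∑ k', ((L * W' * Lᵀ) k k') ^ 2
    (fderiv ℝ F W = 0 ↔
      α • (Lᵀ * L * W * (Lᵀ * L)) +
          Matrix.diagonal μ * W * Matrix.diagonal μ =
        (1 / (M : ℝ)) • ∑ m, (T m)ᵀ * A m * T m) :=
  smoothed_gw_barycenter_foc_general M K hM N A μm μ T hT L α W

end
end
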